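/- For every k ≥ 1, there exists a graph G and an orientation G⃗ of G such that bdim(G) = 2^k + k - 1 while adim(G⃗) ≤ k. -/

import Mathlib

/-!
In `K_n` a vertex with positive broadcast value sees itself at distance `0` and every other
vertex at distance `1`, so no such vertex separates two vertices of value `0`: a resolving
broadcast vanishes at most once, and `bdim K_n = n - 1`.

In the orientation, `u_b` is an out-neighbour of `v_i` exactly when `b i = 0`, so the
truncated distances `min (d(v_i, u_b), 2) ∈ {1, 2}` spell out the binary code `b`. Hence the
`k` vertices `v_i` separate the `u_b` from each other, and each `v_i` is recognised by distance `0`.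
-/

open SimpleGraph Finset

/-- `A` is an adjacency resolving set of `G`. -/
def IsAdjResolving {V : Type*} (G : SimpleGraph V) (A : Set V) : Prop :=
  ∀ x y : V, x ≠ y → ∃ z ∈ A, min (G.edist z x) 2 ≠ min (G.edist z y) 2

/-- The adjacency dimension of `G`. -/
noncomputable def adim {V : Type*} [Fintype V] [DecidableEq V] (G : SimpleGraph V) : ℕ :=
  sInf {n | ∃ A : Finset V, IsAdjResolving G ↑A ∧ A.card = n}

/-- `C` is a locating-dominating set of `G`. -/
def IsLocDom {V : Type*} (G : SimpleGraph V) (C : Set V) : Prop :=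
  (∀ v ∉ C, ((G.neighborSet v ∪ {v}) ∩ C).Nonempty) ∧
  ∀ u ∉ C, ∀ v ∉ C, u ≠ v →
    (G.neighborSet u ∪ {u}) ∩ C ≠ (G.neighborSet v ∪ {v}) ∩ C

/-- The locating-dominating number of `G`. -/
noncomputable def LD {V : Type*} [Fintype V] [DecidableEq V] (G : SimpleGraph V) : ℕ :=
  sInf {n | ∃ C : Finset V, IsLocDom G ↑C ∧ C.card = n}

/-- `f` is a resolving broadcast of `G`. -/
def IsResolvingBroadcast {V : Type*} (G : SimpleGraph V) (f : V → ℕ) : Prop :=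
  ∀ x y : V, x ≠ y → ∃ z, 0 < f z ∧
    min (G.edist z x) ((f z : ℕ∞) + 1) ≠ min (G.edist z y) ((f z : ℕ∞) + 1)

/-- The broadcast dimension of `G`. -/
noncomputable def bdim {V : Type*} [Fintype V] (G : SimpleGraph V) : ℕ :=
  sInf {n | ∃ f : V → ℕ, IsResolvingBroadcast G f ∧ ∑ v, f v = n}

/-- There is a directed path of length `m` from `u` to `v` in the digraph `D`. -/
def DPath {V : Type*} (D : V → V → Prop) (u v : V) (m : ℕ) : Prop :=
  ∃ p : Fin (m + 1) → V, p 0 = u ∧ p (Fin.last m) = v ∧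
    ∀ i : Fin m, D (p i.castSucc) (p i.succ)

/-- Directed distance in the digraph `D` (∞ if there is no directed path). -/
noncomputable def ddist {V : Type*} (D : V → V → Prop) (u v : V) : ℕ∞ :=
  sInf {n : ℕ∞ | ∃ m : ℕ, DPath D u v m ∧ n = m}

/-- `A` is an adjacency resolving set of the digraph `D`. -/
def IsDirAdjResolving {V : Type*} (D : V → V → Prop) (A : Set V) : Prop :=
  ∀ x y : V, x ≠ y → ∃ z ∈ A, min (ddist D z x) 2 ≠ min (ddist D z y) 2

/-- The adjacency dimension of the digraph `D`. -/
noncomputable def dirAdim {V : Type*} [Fintype V] [DecidableEq V] (D : V → V → Prop) : ℕ :=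
  sInf {n | ∃ A : Finset V, IsDirAdjResolving D ↑A ∧ A.card = n}

/-- `f` is a resolving broadcast of the digraph `D`. -/
def IsDirResolvingBroadcast {V : Type*} (D : V → V → Prop) (f : V → ℕ) : Prop :=
  ∀ x y : V, x ≠ y → ∃ z, 0 < f z ∧
    min (ddist D z x) ((f z : ℕ∞) + 1) ≠ min (ddist D z y) ((f z : ℕ∞) + 1)

/-- The broadcast dimension of the digraph `D`. -/
noncomputable def dirBdim {V : Type*} [Fintype V] (D : V → V → Prop) : ℕ :=
  sInf {n | ∃ f : V → ℕ, IsDirResolvingBroadcast D f ∧ ∑ v, f v = n}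

/-- `D` is an orientation of the simple graph `G`. -/
def IsOrientation {V : Type*} (G : SimpleGraph V) (D : V → V → Prop) : Prop :=
  (∀ u v, G.Adj u v ↔ (D u v ∨ D v u)) ∧ ∀ u v, ¬(D u v ∧ D v u)

namespace SimpleGraph

variable {V : Type*}

theorem isResolvingBroadcast_top_iff {f : V → ℕ} :
    IsResolvingBroadcast (⊤ : SimpleGraph V) f ↔ ∀ x y, x ≠ y → 0 < f x ∨ 0 < f y := by
  constructor
  · intro hf x y hxy
    by_contra! hzero
    obtain ⟨z, hz, hne⟩ := hf x y hxy
    have hzx : z ≠ x := by rintro rfl; omega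
    have hzy : z ≠ y := by rintro rfl; omega
    exact hne (by rw [edist_top_of_ne hzx, edist_top_of_ne hzy])
  · intro hf x y hxy
    rcases hf x y hxy with hx | hy
    · refine ⟨x, hx, ?_⟩
      simp [edist_top_of_ne hxy]
    · refine ⟨y, hy, ?_⟩
      simp [edist_top_of_ne hxy.symm]

theorem IsResolvingBroadcast.card_sub_one_le_sum_of_top [Fintype V] {f : V → ℕ}
    (hf : IsResolvingBroadcast (⊤ : SimpleGraph V) f) : Fintype.card V - 1 ≤ ∑ v, f v := by
  classical
  have hzeros : #{v | f v = 0} ≤ 1 := by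
    refine Finset.card_le_one.mpr fun x hx y hy => ?_
    by_contra hxy
    simp only [Finset.mem_filter] at hx hy
    rcases isResolvingBroadcast_top_iff.mp hf x y hxy with h | h <;> omega
  have hpos : #{v | ¬f v = 0} ≤ ∑ v, f v := calc
    #{v | ¬f v = 0} = ∑ v ∈ {v | ¬f v = 0}, 1 := Finset.card_eq_sum_ones _
    _ ≤ ∑ v ∈ {v | ¬f v = 0}, f v :=
      Finset.sum_le_sum fun v hv => Nat.one_le_iff_ne_zero.mpr (Finset.mem_filter.mp hv).2
    _ ≤ ∑ v, f v := Finset.sum_le_sum_of_subset (Finset.filter_subset _ _)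
  have hsplit := Finset.card_filter_add_card_filter_not (s := Finset.univ) (fun v => f v = 0)
  rw [Finset.card_univ] at hsplit
  omega

theorem bdim_top [Fintype V] : bdim (⊤ : SimpleGraph V) = Fintype.card V - 1 := by
  classical
  obtain ⟨f, hf, hsum⟩ :
      ∃ f, IsResolvingBroadcast (⊤ : SimpleGraph V) f ∧ ∑ v, f v = Fintype.card V - 1 := by
    cases isEmpty_or_nonempty V with
    | inl _ => exact ⟨0, fun x => isEmptyElim x, by simp⟩
    | inr hV =>
      obtain ⟨v₀⟩ := hV
      refine ⟨fun v => if v ≠ v₀ then 1 else 0, isResolvingBroadcast_top_iff.mpr ?_, ?_⟩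
      · intro x y hxy
        by_cases hx : x = v₀
        · subst hx; simp [Ne.symm hxy]
        · simp [hx]
      · rw [Finset.sum_boole, Finset.filter_ne', Finset.card_erase_of_mem (Finset.mem_univ _)]
        simp
  refine le_antisymm (Nat.sInf_le ⟨f, hf, hsum⟩) (le_csInf ⟨_, f, hf, hsum⟩ ?_)
  rintro n ⟨g, hg, rfl⟩
  exact hg.card_sub_one_le_sum_of_top

end SimpleGraph

section Digraph

variable {V : Type*} {D : V → V → Prop} {u v : V}

theorem dPath_zero_iff : DPath D u v 0 ↔ u = v :=
  ⟨fun ⟨_, h0, hl, _⟩ => h0.symm.trans hl, fun h => ⟨fun _ => u, rfl, h, fun i => i.elim0⟩⟩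

theorem dPath_one_iff : DPath D u v 1 ↔ D u v :=
  ⟨fun ⟨_, h0, hl, hs⟩ => h0 ▸ hl ▸ hs 0,
    fun h => ⟨![u, v], rfl, rfl, fun i => by fin_cases i; simpa using h⟩⟩

theorem ddist_le_of_dPath {m : ℕ} (h : DPath D u v m) : ddist D u v ≤ m :=
  sInf_le ⟨m, h, rfl⟩

theorem le_ddist_of_forall_not_dPath {m : ℕ} (h : ∀ j < m, ¬DPath D u v j) :
    (m : ℕ∞) ≤ ddist D u v := by
  refine le_sInf ?_
  rintro n ⟨j, hj, rfl⟩
  by_contra hlt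
  exact h j (by exact_mod_cast not_le.mp hlt) hj

theorem ddist_self (u : V) : ddist D u u = 0 :=
  nonpos_iff_eq_zero.mp (ddist_le_of_dPath (dPath_zero_iff.mpr rfl))

theorem min_ddist_two_eq_one (hne : u ≠ v) (h : D u v) : min (ddist D u v) 2 = 1 := by
  have hle : ddist D u v ≤ 1 := by exact_mod_cast ddist_le_of_dPath (dPath_one_iff.mpr h)
  have hge : (1 : ℕ) ≤ ddist D u v := le_ddist_of_forall_not_dPath fun j hj => by
    obtain rfl : j = 0 := by omega
    exact mt dPath_zero_iff.mp hne
  rw [min_eq_left (hle.trans one_le_two), le_antisymm hle (by exact_mod_cast hge)]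

theorem min_ddist_two_eq_two (hne : u ≠ v) (h : ¬D u v) : min (ddist D u v) 2 = 2 := by
  have hge : (2 : ℕ) ≤ ddist D u v := le_ddist_of_forall_not_dPath fun j hj => by
    interval_cases j
    exacts [mt dPath_zero_iff.mp hne, mt dPath_one_iff.mp h]
  exact min_eq_right (by exact_mod_cast hge)

theorem min_ddist_two_pos (hne : u ≠ v) : 0 < min (ddist D u v) 2 := by
  by_cases h : D u v
  · simp [min_ddist_two_eq_one hne h]
  · simp [min_ddist_two_eq_two hne h]

theorem isDirAdjResolving_of_separating {A : Set V}
    (hA : ∀ x y, x ∉ A → y ∉ A → x ≠ y → ∃ z ∈ A, ¬(D z x ↔ D z y)) :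
    IsDirAdjResolving D A := by
  intro x y hxy
  by_cases hx : x ∈ A
  · refine ⟨x, hx, ?_⟩
    simpa [ddist_self] using (min_ddist_two_pos (D := D) hxy).ne
  by_cases hy : y ∈ A
  · refine ⟨y, hy, ?_⟩
    simpa [ddist_self] using (min_ddist_two_pos (D := D) hxy.symm).ne'
  obtain ⟨z, hz, hsep⟩ := hA x y hx hy hxy
  have hzx : z ≠ x := ne_of_mem_of_not_mem hz hx
  have hzy : z ≠ y := ne_of_mem_of_not_mem hz hy
  refine ⟨z, hz, ?_⟩
  by_cases h : D z x
  · rw [min_ddist_two_eq_one hzx h, min_ddist_two_eq_two hzy (by tauto)]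
    decide
  · rw [min_ddist_two_eq_two hzx h, min_ddist_two_eq_one hzy (by tauto)]
    decide

end Digraph

section BinaryCode

variable {V ι : Type*}

/-- Through `e`, the vertices are split into `v i` (`e = inl i`) and `u b` (`e = inr b`); the
edge between `v i` and `u b` points towards `v i` iff `b i = true`, and all other edges follow
the order of `V`. -/
def binaryCodeOrientation [LinearOrder V] (e : V → ι ⊕ (ι → Bool)) (x y : V) : Prop :=
  match e x, e y with
  | .inl i, .inr b => b i = false
  | .inr b, .inl i => b i = true
  | _, _ => x < y

theorem isOrientation_top_binaryCodeOrientation [LinearOrder V] (e : V → ι ⊕ (ι → Bool)) :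
    IsOrientation ⊤ (binaryCodeOrientation e) := by
  refine ⟨fun x y => ?_, fun x y => ?_⟩ <;> unfold binaryCodeOrientation <;>
    rcases hx : e x with i | b <;> rcases hy : e y with j | c <;> simp
  all_goals first | exact le_of_lt | (rintro rfl; simp_all)

theorem dirAdim_binaryCodeOrientation_le [LinearOrder V] [Fintype V] [Fintype ι]
    (e : V ≃ ι ⊕ (ι → Bool)) :
    dirAdim (binaryCodeOrientation e) ≤ Fintype.card ι := by
  let A : Finset V := Finset.univ.map ⟨e.symm ∘ Sum.inl, e.symm.injective.comp Sum.inl_injective⟩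
  have hcode : ∀ x ∉ A, ∃ b, e x = .inr b := fun x hx => by
    rcases hex : e x with i | b
    · exact absurd (Finset.mem_map.mpr ⟨i, Finset.mem_univ _, by simp [← hex]⟩) hx
    · exact ⟨b, rfl⟩
  have hA : IsDirAdjResolving (binaryCodeOrientation e) A := by
    refine isDirAdjResolving_of_separating fun x y hx hy hxy => ?_
    obtain ⟨b, hb⟩ := hcode x hx
    obtain ⟨c, hc⟩ := hcode y hy
    obtain ⟨i, hi⟩ := Function.ne_iff.mp fun hbc : b = c => hxy (e.injective (by rw [hb, hc, hbc]))
    refine ⟨e.symm (.inl i), Finset.mem_map_of_mem _ (Finset.mem_univ i), ?_⟩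
    simpa [binaryCodeOrientation, hb, hc] using hi
  calc dirAdim (binaryCodeOrientation e) ≤ #A := Nat.sInf_le ⟨A, hA, rfl⟩
    _ = Fintype.card ι := by simp [A]

end BinaryCode

theorem stmt_14_general (k : ℕ) :
    ∃ (G : SimpleGraph (Fin (2 ^ k + k))) (D : Fin (2 ^ k + k) → Fin (2 ^ k + k) → Prop),
      IsOrientation G D ∧ bdim G = 2 ^ k + k - 1 ∧ dirAdim D ≤ k := by
  let e : Fin (2 ^ k + k) ≃ Fin k ⊕ (Fin k → Bool) :=
    Fintype.equivOfCardEq (by simp [add_comm])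
  refine ⟨⊤, binaryCodeOrientation e, isOrientation_top_binaryCodeOrientation e, ?_, ?_⟩
  · rw [SimpleGraph.bdim_top, Fintype.card_fin]
  · simpa using dirAdim_binaryCodeOrientation_le e

/-- There is a graph `G` with `bdim(G) = 2^k + k - 1` having an orientation
`G⃗` with `adim(G⃗) ≤ k`. -/
theorem stmt_14 (k : ℕ) (hk : 1 ≤ k) :
    ∃ (G : SimpleGraph (Fin (2 ^ k + k))) (D : Fin (2 ^ k + k) → Fin (2 ^ k + k) → Prop),
      IsOrientation G D ∧ bdim G = 2 ^ k + k - 1 ∧ dirAdim D ≤ k :=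
  stmt_14_general k
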